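/- Let X be a locally compact, σ-compact metrizable topological space and let φ be an action of a group G on X. Then φ is metric-independent expansive (MIE) if and only if φ is cocompactly expansive. -/

import Mathlib

/-- An action `φ` is expansive with respect to a distance function `d`:
there is `c > 0` such that any two distinct points are separated beyond `c`
by some group element. -/
def ExpansiveWith {G X : Type*} (φ : G → X → X) (d : X → X → ℝ) : Prop :=
  ∃ c > 0, ∀ x y : X, x ≠ y → ∃ g : G, c < d (φ g x) (φ g y)

/-- Metric-independent expansiveness: expansive with respect to every metric
compatible with the topology. -/
def MIE {G X : Type*} [tX : TopologicalSpace X] (φ : G → X → X) : Prop :=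
  ∀ m : MetricSpace X, m.toUniformSpace.toTopologicalSpace = tX →
    ExpansiveWith φ (fun x y => @dist X m.toDist x y)

/-- Cocompact expansiveness: there are a finite open cover `𝒰` and a compact set `K`
with `G ⬝ K = X` such that if for all `g` the pair `{g⬝x, g⬝y}` is contained in a member
of `𝒰 ∪ {X \ K}`, then `x = y`. -/
def CocompactlyExpansive {G X : Type*} [TopologicalSpace X] (φ : G → X → X) : Prop :=
  ∃ (𝒰 : Finset (Set X)) (K : Set X),
    (∀ U ∈ 𝒰, IsOpen U) ∧ (∀ x : X, ∃ U ∈ 𝒰, x ∈ U) ∧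
    IsCompact K ∧ (∀ x : X, ∃ g : G, ∃ k ∈ K, x = φ g k) ∧
    (∀ x y : X, (∀ g : G, (∃ U ∈ 𝒰, φ g x ∈ U ∧ φ g y ∈ U) ∨ (φ g x ∉ K ∧ φ g y ∉ K)) →
      x = y)

/-!
If `𝒰` and `K` witness cocompact expansiveness, a Lebesgue number `δ` of `𝒰` on `K` makes any
compatible metric expansive with constant `δ / 2`. Conversely, `X` is second countable, so its
one-point compactification is metrizable; the restricted metric `d` on `X` has the property that
points outside a large compact set `K` are close to `∞`, hence `d`-close to each other. When the
action is cocompact, the failure of cocompact expansiveness for the cover of `C ∪ K` by small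
balls and `(C ∪ K)ᶜ` yields two distinct points whose orbits stay `d`-close; when it is not,
two distinct points outside `G ⬝ K` do. So `d` is not expansive.
-/

open Filter Topology TopologicalSpace Metric OnePoint

namespace OnePoint

variable {X : Type*} [TopologicalSpace X]

instance [SecondCountableTopology X] [WeaklyLocallyCompactSpace X] [T2Space X] :
    SecondCountableTopology (OnePoint X) := by
  let E := CompactExhaustion.choice X
  let B : Set (Set (OnePoint X)) :=
    Set.image ((↑) : X → OnePoint X) '' countableBasis X ∪ Set.range fun n => ((↑) '' E n)ᶜ
  have hB : IsTopologicalBasis B := by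
    refine isTopologicalBasis_of_isOpen_of_nhds ?_ ?_
    · rintro _ (⟨b, hb, rfl⟩ | ⟨n, rfl⟩)
      · exact isOpenMap_coe _ (isOpen_of_mem_countableBasis hb)
      · exact isOpen_compl_image_coe.2 ⟨(E.isCompact n).isClosed, E.isCompact n⟩
    · intro a U haU hU
      induction a using OnePoint.rec with
      | infty =>
        obtain ⟨n, hn⟩ := E.exists_superset_of_isCompact ((isOpen_iff_of_mem haU).1 hU).2
        refine ⟨_, Or.inr ⟨n, rfl⟩, infty_notMem_image_coe, fun p hp => ?_⟩
        induction p using OnePoint.rec with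
        | infty => exact haU
        | coe x => exact not_not.1 fun hx => hp ⟨x, hn hx, rfl⟩
      | coe x =>
        obtain ⟨b, hb, hxb, hbU⟩ := (isBasis_countableBasis X).exists_subset_of_mem_open haU
          (hU.preimage continuous_coe)
        exact ⟨_, Or.inl ⟨b, hb, rfl⟩, ⟨x, hxb, rfl⟩, Set.image_subset_iff.2 hbU⟩
  exact hB.secondCountableTopology <|
    ((countable_countableBasis X).image _).union (Set.countable_range _)

end OnePoint

theorem exists_metric_dist_lt_outside_compact (X : Type*) [TopologicalSpace X]
    [MetrizableSpace X] [LocallyCompactSpace X] [SigmaCompactSpace X] :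
    ∃ m : MetricSpace X, m.toUniformSpace.toTopologicalSpace = ‹TopologicalSpace X› ∧
      ∀ ε > 0, ∃ K : Set X, IsCompact K ∧ ∀ x ∉ K, ∀ y ∉ K, @dist X m.toDist x y < ε := by
  have : SecondCountableTopology X := by
    let := metrizableSpaceMetric X
    infer_instance
  let := metrizableSpaceMetric (OnePoint X)
  refine ⟨OnePoint.isOpenEmbedding_coe.isEmbedding.comapMetricSpace _, rfl, fun ε hε => ?_⟩
  have hnear : ∀ᶠ x : X in cocompact X, dist (x : OnePoint X) ∞ < ε / 2 := by
    rw [← coclosedCompact_eq_cocompact]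
    exact tendsto_coe_infty (ball_mem_nhds (∞ : OnePoint X) (half_pos hε))
  obtain ⟨K, hK, hKnear⟩ := mem_cocompact.1 hnear
  refine ⟨K, hK, fun x hx y hy => ?_⟩
  calc dist (x : OnePoint X) y ≤ dist (x : OnePoint X) ∞ + dist (y : OnePoint X) ∞ :=
        dist_triangle_right _ _ _
    _ < ε / 2 + ε / 2 := add_lt_add (hKnear hx) (hKnear hy)
    _ = ε := add_halves ε

theorem CocompactlyExpansive.expansiveWith_dist {G X : Type*} [MetricSpace X] {φ : G → X → X}
    (h : CocompactlyExpansive φ) : ExpansiveWith φ (fun x y => dist x y) := by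
  obtain ⟨𝒰, K, h𝒰_open, h𝒰_cover, hK, -, hsep⟩ := h
  obtain ⟨δ, hδ, hleb⟩ := lebesgue_number_lemma_of_metric_sUnion (c := (𝒰 : Set (Set X))) hK
    h𝒰_open fun x _ => Set.mem_sUnion.2 (h𝒰_cover x)
  have hclose : ∀ a ∈ K, ∀ b, dist b a < δ → ∃ U ∈ 𝒰, a ∈ U ∧ b ∈ U := fun a ha b hb =>
    let ⟨U, hU, hball⟩ := hleb a ha
    ⟨U, hU, hball (mem_ball_self hδ), hball hb⟩
  refine ⟨δ / 2, half_pos hδ, fun x y hxy => ?_⟩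
  by_contra! hnear
  refine hxy (hsep x y fun g => ?_)
  have hlt : dist (φ g x) (φ g y) < δ := (hnear g).trans_lt (half_lt_self hδ)
  by_cases hx : φ g x ∈ K
  · exact Or.inl (hclose _ hx _ (dist_comm (φ g x) _ ▸ hlt))
  by_cases hy : φ g y ∈ K
  · obtain ⟨U, hU, hyU, hxU⟩ := hclose _ hy _ hlt
    exact Or.inl ⟨U, hU, hxU, hyU⟩
  exact Or.inr ⟨hx, hy⟩

theorem exists_finset_cover_dist_lt {X : Type*} [MetricSpace X] {L : Set X} (hL : IsCompact L)
    {ε : ℝ} (hε : 0 < ε) :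
    ∃ 𝒰 : Finset (Set X), (∀ U ∈ 𝒰, IsOpen U) ∧ (∀ x : X, ∃ U ∈ 𝒰, x ∈ U) ∧
      ∀ U ∈ 𝒰, ∀ x ∈ U, ∀ y ∈ U, dist x y < ε ∨ (x ∉ L ∧ y ∉ L) := by
  obtain ⟨t, ht⟩ := hL.elim_finite_subcover (fun p => ball p (ε / 2)) (fun _ => isOpen_ball)
    fun x _ => Set.mem_iUnion.2 ⟨x, mem_ball_self (half_pos hε)⟩
  classical
  refine ⟨insert Lᶜ (t.image fun p => ball p (ε / 2)), ?_, fun x => ?_, ?_⟩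
  · simp only [Finset.forall_mem_insert, Finset.forall_mem_image]
    exact ⟨hL.isClosed.isOpen_compl, fun _ _ => isOpen_ball⟩
  · by_cases hx : x ∈ L
    · obtain ⟨p, hp, hxp⟩ := Set.mem_iUnion₂.1 (ht hx)
      exact ⟨_, Finset.mem_insert_of_mem (Finset.mem_image_of_mem _ hp), hxp⟩
    · exact ⟨_, Finset.mem_insert_self _ _, hx⟩
  · simp only [Finset.forall_mem_insert, Finset.forall_mem_image]
    refine ⟨fun x hx y hy => Or.inr ⟨hx, hy⟩, fun p _ x hx y hy => Or.inl ?_⟩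
    calc dist x y ≤ dist x p + dist y p := dist_triangle_right _ _ _
      _ < ε / 2 + ε / 2 := add_lt_add hx hy
      _ = ε := add_halves ε

section Action

variable {G X : Type*} [Group G] {φ : G → X → X}

theorem exists_ne_forall_apply_notMem_of_not_cocompact [TopologicalSpace X]
    (hone : ∀ x : X, φ 1 x = x) (hmul : ∀ (g h : G) (x : X), φ (g * h) x = φ g (φ h x))
    (hφ : ¬ ∃ C : Set X, IsCompact C ∧ ∀ x : X, ∃ g : G, ∃ k ∈ C, x = φ g k)
    {K : Set X} (hK : IsCompact K) :
    ∃ x y : X, x ≠ y ∧ ∀ g : G, φ g x ∉ K ∧ φ g y ∉ K := by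
  have horbit : ∀ {C : Set X} {z : X}, (∀ g : G, ∀ k ∈ C, z ≠ φ g k) → ∀ g : G, φ g z ∉ C :=
    fun hz g hgz => hz g⁻¹ _ hgz (by rw [← hmul, inv_mul_cancel, hone])
  obtain ⟨p, hp⟩ : ∃ p : X, ∀ g : G, ∀ k ∈ K, p ≠ φ g k := by
    simpa using fun h => hφ ⟨K, hK, h⟩
  obtain ⟨q, hq⟩ : ∃ q : X, ∀ g : G, ∀ k ∈ insert p K, q ≠ φ g k := by
    simpa using fun h => hφ ⟨insert p K, hK.insert p, h⟩
  refine ⟨q, p, fun hqp => hq 1 p (Set.mem_insert p K) (by rw [hone, hqp]), fun g => ?_⟩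
  exact ⟨fun h => horbit hq g (Set.mem_insert_of_mem p h), horbit hp g⟩

theorem exists_ne_forall_dist_lt_of_not_cocompactlyExpansive [MetricSpace X]
    (hone : ∀ x : X, φ 1 x = x) (hmul : ∀ (g h : G) (x : X), φ (g * h) x = φ g (φ h x))
    (hφ : ¬ CocompactlyExpansive φ) {K : Set X} (hK : IsCompact K) {ε : ℝ} (hε : 0 < ε) :
    ∃ x y : X, x ≠ y ∧ ∀ g : G, dist (φ g x) (φ g y) < ε ∨ (φ g x ∉ K ∧ φ g y ∉ K) := by
  by_cases hcocompact : ∃ C : Set X, IsCompact C ∧ ∀ x : X, ∃ g : G, ∃ k ∈ C, x = φ g k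
  swap
  · obtain ⟨x, y, hxy, hxyK⟩ :=
      exists_ne_forall_apply_notMem_of_not_cocompact hone hmul hcocompact hK
    exact ⟨x, y, hxy, fun g => Or.inr (hxyK g)⟩
  obtain ⟨C, hC, hGC⟩ := hcocompact
  obtain ⟨𝒰, h𝒰_open, h𝒰_cover, h𝒰_small⟩ := exists_finset_cover_dist_lt (hC.union hK) hε
  have hGCK : ∀ x : X, ∃ g : G, ∃ k ∈ C ∪ K, x = φ g k := fun x =>
    let ⟨g, k, hk, hx⟩ := hGC x
    ⟨g, k, Or.inl hk, hx⟩
  obtain ⟨x, y, hxy, hne⟩ : ∃ x y : X, (∀ g : G, (∃ U ∈ 𝒰, φ g x ∈ U ∧ φ g y ∈ U) ∨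
      (φ g x ∉ C ∪ K ∧ φ g y ∉ C ∪ K)) ∧ x ≠ y := by
    simpa [CocompactlyExpansive] using
      fun h => hφ ⟨𝒰, C ∪ K, h𝒰_open, h𝒰_cover, hC.union hK, hGCK, h⟩
  refine ⟨x, y, hne, fun g => ?_⟩
  have hsmall : dist (φ g x) (φ g y) < ε ∨ (φ g x ∉ C ∪ K ∧ φ g y ∉ C ∪ K) := by
    rcases hxy g with ⟨U, hU, hxU, hyU⟩ | hout
    exacts [h𝒰_small U hU _ hxU _ hyU, Or.inr hout]
  exact hsmall.imp_right fun ⟨hx, hy⟩ => ⟨fun h => hx (Or.inr h), fun h => hy (Or.inr h)⟩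

theorem not_expansiveWith_dist_of_not_cocompactlyExpansive [MetricSpace X]
    (hone : ∀ x : X, φ 1 x = x) (hmul : ∀ (g h : G) (x : X), φ (g * h) x = φ g (φ h x))
    (hdist : ∀ ε > 0, ∃ K : Set X, IsCompact K ∧ ∀ x ∉ K, ∀ y ∉ K, dist x y < ε)
    (hφ : ¬ CocompactlyExpansive φ) : ¬ ExpansiveWith φ (fun x y => dist x y) := by
  rintro ⟨c, hc, hexp⟩
  obtain ⟨K, hK, hKc⟩ := hdist c hc
  obtain ⟨x, y, hxy, hclose⟩ :=
    exists_ne_forall_dist_lt_of_not_cocompactlyExpansive hone hmul hφ hK hc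
  obtain ⟨g, hg⟩ := hexp x y hxy
  rcases hclose g with hlt | ⟨hx, hy⟩
  · exact hg.not_gt hlt
  · exact hg.not_gt (hKc _ hx _ hy)

end Action

theorem mie_iff_cocompactlyExpansive {G X : Type*} [Group G] [TopologicalSpace X]
    [TopologicalSpace.MetrizableSpace X] [LocallyCompactSpace X] [SigmaCompactSpace X]
    (φ : G → X → X) (hone : ∀ x : X, φ 1 x = x)
    (hmul : ∀ (g h : G) (x : X), φ (g * h) x = φ g (φ h x)) :
    MIE φ ↔ CocompactlyExpansive φ := by
  constructor
  · intro hMIE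
    by_contra hφ
    obtain ⟨m, hm, hdist⟩ := exists_metric_dist_lt_outside_compact X
    subst hm
    exact not_expansiveWith_dist_of_not_cocompactlyExpansive hone hmul hdist hφ (hMIE m rfl)
  · rintro hφ m rfl
    exact hφ.expansiveWith_dist
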